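/- arXiv:2009.08780 — 5 statements merged into one kernel-verified Lean document; each statement's English description precedes it below -/
import Mathlib

section
/- Assume the channel matrix $\Phi$ has rank $m$ (full row rank, $m \leq n$). Then the capacity-achieving input distribution $\lambda^*$, i.e., the maximizer of $I(\lambda,\Phi)$ over the simplex $\Delta(\mathcal{X})$, is unique. -/
/-!
Write `I(λ) = H(λΦ) - ∑ᵢ λᵢ H(Pⁱ)`: output entropy minus conditional entropy. The second term is
linear in `λ`, and `H` is strictly concave on the nonnegative orthant. Full row rank makes
`λ ↦ λΦ` injective, so `I` is strictly concave on the simplex, and a strictly concave function has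
at most one maximiser.
-/

open Finset Real Matrix

noncomputable def shannonEntropy {κ : Type*} [Fintype κ] (p : κ → ℝ) : ℝ :=
  ∑ j, negMulLog (p j)

noncomputable def mutualInformation {ι κ : Type*} [Fintype ι] [Fintype κ] (P : Matrix ι κ ℝ)
    (l : ι → ℝ) : ℝ :=
  ∑ i, ∑ j, l i * P i j * log (P i j / (l ᵥ* P) j)

theorem StrictConcaveOn.comp_linearMap_of_injective {𝕜 E F β : Type*} [Semiring 𝕜]
    [PartialOrder 𝕜] [AddCommMonoid E] [AddCommMonoid F] [AddCommMonoid β] [PartialOrder β]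
    [Module 𝕜 E] [Module 𝕜 F] [SMul 𝕜 β] {f : F → β} {s : Set F}
    (hf : StrictConcaveOn 𝕜 s f) (g : E →ₗ[𝕜] F) (hg : Function.Injective g) :
    StrictConcaveOn 𝕜 (g ⁻¹' s) (f ∘ g) :=
  ⟨hf.1.linear_preimage g, fun x hx y hy hxy a b ha hb hab => by
    simpa only [Function.comp_apply, map_add, map_smul] using hf.2 hx hy (hg.ne hxy) ha hb hab⟩

theorem Matrix.vecMul_injective_of_rank_eq_card {R m n : Type*} [Field R] [Fintype m] [Fintype n]
    {A : Matrix m n R} (hA : A.rank = Fintype.card m) : Function.Injective A.vecMul :=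
  vecMul_injective_iff.mpr <| linearIndependent_iff_card_eq_finrank_span.mpr <| by
    rw [← hA, rank_eq_finrank_span_row, Set.finrank]

variable {ι κ : Type*} [Fintype ι] [Fintype κ]

theorem strictConcaveOn_shannonEntropy :
    StrictConcaveOn ℝ (Set.Ici 0) (shannonEntropy : (κ → ℝ) → ℝ) := by
  refine ⟨convex_Ici 0, fun p hp q hq hpq a b ha hb hab => ?_⟩
  obtain ⟨j, hj⟩ := Function.ne_iff.mp hpq
  simp only [shannonEntropy, smul_eq_mul, mul_sum, ← sum_add_distrib, Pi.add_apply,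
    Pi.smul_apply]
  exact sum_lt_sum (fun k _ => concaveOn_negMulLog.2 (hp k) (hq k) ha.le hb.le hab)
    ⟨j, mem_univ j, strictConcaveOn_negMulLog.2 (hp j) (hq j) hj ha hb hab⟩

theorem concaveOn_neg_dotProduct (h : ι → ℝ) {s : Set (ι → ℝ)} (hs : Convex ℝ s) :
    ConcaveOn ℝ s fun l => -(l ⬝ᵥ h) :=
  ((-(dotProductBilin ℝ ℝ).flip h).concaveOn hs).congr fun l _ => by simp

theorem sum_mul_log_div_eq (w x : ι → ℝ) (hw : ∀ i, 0 ≤ w i) (hx : ∀ i, 0 ≤ x i) :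
    ∑ i, w i * x i * log (x i / ∑ k, w k * x k)
      = negMulLog (∑ k, w k * x k) + ∑ i, w i * (x i * log (x i)) := by
  set q := ∑ k, w k * x k
  -- when `q = 0`, `log (x i / q)` is the junk value `log 0`, but then every `w i * x i` vanishes
  have hterm : ∀ i, w i * x i * log (x i / q) = w i * (x i * log (x i)) - w i * x i * log q := by
    intro i
    by_cases hwx : w i * x i = 0
    · rw [← mul_assoc, hwx]; ring
    have hxi : x i ≠ 0 := right_ne_zero_of_mul hwx
    have hq : q ≠ 0 := (lt_of_lt_of_le ((mul_nonneg (hw i) (hx i)).lt_of_ne' hwx)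
      (single_le_sum (fun k _ => mul_nonneg (hw k) (hx k)) (mem_univ i))).ne'
    rw [log_div hxi hq]; ring
  rw [sum_congr rfl fun i _ => hterm i, sum_sub_distrib, ← sum_mul, negMulLog]
  ring

theorem mutualInformation_eq {P : Matrix ι κ ℝ} (hP : ∀ i j, 0 ≤ P i j) {l : ι → ℝ}
    (hl : ∀ i, 0 ≤ l i) :
    mutualInformation P l = shannonEntropy (l ᵥ* P) - l ⬝ᵥ fun i => shannonEntropy (P i) := by
  rw [mutualInformation, sum_comm]
  simp only [vecMul, dotProduct, sum_mul_log_div_eq l (fun i => P i _) hl (fun i => hP i _),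
    sum_add_distrib, shannonEntropy, negMulLog, neg_mul, mul_neg, mul_sum, sum_neg_distrib,
    sub_neg_eq_add, sum_comm (γ := κ)]

theorem strictConcaveOn_mutualInformation {P : Matrix ι κ ℝ} (hP : ∀ i j, 0 ≤ P i j)
    (hinj : Function.Injective P.vecMul) :
    StrictConcaveOn ℝ (stdSimplex ℝ ι) (mutualInformation P) := by
  have hsub : stdSimplex ℝ ι ⊆ P.vecMulLinear ⁻¹' Set.Ici 0 := fun l hl j =>
    sum_nonneg fun i _ => mul_nonneg (hl.1 i) (hP i j)
  have hH := strictConcaveOn_shannonEntropy.comp_linearMap_of_injective P.vecMulLinear hinj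
  have hI := hH.add_concaveOn (concaveOn_neg_dotProduct (fun i => shannonEntropy (P i)) hH.1)
  refine (hI.subset hsub (convex_stdSimplex ℝ ι)).congr fun l hl => ?_
  rw [mutualInformation_eq hP hl.1]
  simp [sub_eq_add_neg]

theorem stmt5_general (m n : ℕ) (P : Fin m → Fin n → ℝ)
    (hrow : ∀ i, (∀ j, 0 ≤ P i j) ∧ ∑ j, P i j = 1)
    (hrank : (Matrix.of P).rank = m)
    (lam1 lam2 : Fin m → ℝ)
    (h1 : lam1 ∈ {l : Fin m → ℝ | (∀ i, 0 ≤ l i) ∧ ∑ i, l i = 1})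
    (h2 : lam2 ∈ {l : Fin m → ℝ | (∀ i, 0 ≤ l i) ∧ ∑ i, l i = 1})
    (hmax1 : IsMaxOn
      (fun l : Fin m → ℝ => ∑ i, ∑ j, l i * P i j * Real.log (P i j / (∑ k, l k * P k j)))
      {l : Fin m → ℝ | (∀ i, 0 ≤ l i) ∧ ∑ i, l i = 1} lam1)
    (hmax2 : IsMaxOn
      (fun l : Fin m → ℝ => ∑ i, ∑ j, l i * P i j * Real.log (P i j / (∑ k, l k * P k j)))
      {l : Fin m → ℝ | (∀ i, 0 ≤ l i) ∧ ∑ i, l i = 1} lam2) :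
    lam1 = lam2 :=
  (strictConcaveOn_mutualInformation (P := Matrix.of P) (fun i => (hrow i).1)
    (vecMul_injective_of_rank_eq_card (by rwa [Fintype.card_fin]))).eq_of_isMaxOn
    hmax1 hmax2 h1 h2

theorem stmt5 (m n : ℕ) (P : Fin m → Fin n → ℝ)
    (hrow : ∀ i, (∀ j, 0 ≤ P i j) ∧ ∑ j, P i j = 1)
    (hcol : ∀ j, ∃ i, 0 < P i j)
    (hrank : (Matrix.of P).rank = m)
    (lam1 lam2 : Fin m → ℝ)
    (h1 : lam1 ∈ {l : Fin m → ℝ | (∀ i, 0 ≤ l i) ∧ ∑ i, l i = 1})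
    (h2 : lam2 ∈ {l : Fin m → ℝ | (∀ i, 0 ≤ l i) ∧ ∑ i, l i = 1})
    (hmax1 : IsMaxOn
      (fun l : Fin m → ℝ => ∑ i, ∑ j, l i * P i j * Real.log (P i j / (∑ k, l k * P k j)))
      {l : Fin m → ℝ | (∀ i, 0 ≤ l i) ∧ ∑ i, l i = 1} lam1)
    (hmax2 : IsMaxOn
      (fun l : Fin m → ℝ => ∑ i, ∑ j, l i * P i j * Real.log (P i j / (∑ k, l k * P k j)))
      {l : Fin m → ℝ | (∀ i, 0 ≤ l i) ∧ ∑ i, l i = 1} lam2) :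
    lam1 = lam2 :=
  stmt5_general m n P hrow hrank lam1 lam2 h1 h2 hmax1 hmax2
end

section
/- Let $B \in \mathbb{R}^{m_1 \times m_1}$ have entries $B_{i'i} = \lambda^*_i \sum_{j=1}^n P^{i'}_j P^i_j / Q^*_j$, where $\lambda^*_i > 0$ for $i=1,\ldots,m_1$, $Q^*_j = \sum_i \lambda^*_i P^i_j > 0$, and the matrix $\Phi_1$ with rows $P^1,\ldots,P^{m_1}$ has rank $m_1$. Then, with $\Lambda^{1/2} = \mathrm{diag}(\sqrt{\lambda^*_1},\ldots,\sqrt{\lambda^*_{m_1}})$, the matrix $\Lambda^{1/2} B \Lambda^{-1/2}$ is symmetric positive definite; in particular all eigenvalues of $B$ are real and positive. -/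
/-!
Writing `Q j = ∑ k, λ k * P k j`, the matrix factors as `B = G Λ` with
`G = Φ diag(Q)⁻¹ Φᵀ` and `Λ = diag λ`. Since `Φ` has full row rank, `G` is positive definite, so
`Λ^{1/2} B Λ^{-1/2} = Λ^{1/2} G Λ^{1/2}` is positive definite as well. Finally `B` is similar to
this matrix via `Λ^{1/2}`, so its real eigenvalues are eigenvalues of a positive definite matrix.
-/

open Matrix Module.End

namespace Matrix

variable {m n K : Type*} [Fintype m] [Fintype n]

theorem vecMul_injective_of_rank_eq_card_s9 [Field K] {A : Matrix m n K}
    (h : A.rank = Fintype.card m) : Function.Injective A.vecMul := by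
  rw [vecMul_injective_iff, linearIndependent_iff_card_eq_finrank_span, ← h,
    rank_eq_finrank_span_row]
  rfl

variable [DecidableEq m]

theorem PosDef.pos_of_mem_spectrum {S : Matrix m m ℝ} (hS : S.PosDef) {β : ℝ}
    (hβ : β ∈ spectrum ℝ S) : 0 < β := by
  rw [hS.isHermitian.spectrum_real_eq_range_eigenvalues] at hβ
  obtain ⟨i, rfl⟩ := hβ
  exact hS.eigenvalues_pos i

theorem PosDef.pos_of_hasEigenvalue_of_semiconjBy {S B U : Matrix m m ℝ} (hS : S.PosDef)
    (hU : IsUnit U) (hB : SemiconjBy U B S) {β : ℝ} (hβ : HasEigenvalue (toLin' B) β) : 0 < β := by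
  lift U to (Matrix m m ℝ)ˣ using hU
  have : B = ((U⁻¹ : (Matrix m m ℝ)ˣ) : Matrix m m ℝ) * S * U := by
    rw [mul_assoc, ← hB.eq, ← mul_assoc, U.inv_mul, one_mul]
  apply hS.pos_of_mem_spectrum
  rw [← spectrum.units_conjugate' (u := U), ← this, ← spectrum_toLin']
  exact hβ.mem_spectrum

section SqrtDiagonal

variable {G : Matrix m m ℝ} {d : m → ℝ}

theorem diagonal_sqrt_mul_self (hd : ∀ i, 0 ≤ d i) :
    diagonal (fun i => √(d i)) * diagonal (fun i => √(d i)) = diagonal d := by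
  rw [diagonal_mul_diagonal]
  exact congrArg diagonal (funext fun i => Real.mul_self_sqrt (hd i))

theorem diagonal_sqrt_mul_diagonal_inv_sqrt (hd : ∀ i, 0 < d i) :
    diagonal (fun i => √(d i)) * diagonal (fun i => (√(d i))⁻¹) = 1 := by
  rw [diagonal_mul_diagonal, ← diagonal_one]
  exact congrArg diagonal (funext fun i => mul_inv_cancel₀ (Real.sqrt_pos.2 (hd i)).ne')

theorem isUnit_diagonal_sqrt (hd : ∀ i, 0 < d i) : IsUnit (diagonal fun i => √(d i)) :=
  isUnit_diagonal.2 <| Pi.isUnit_iff.2 fun i => (Real.sqrt_pos.2 (hd i)).ne'.isUnit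

theorem diagonal_sqrt_conj_mul_diagonal (hd : ∀ i, 0 < d i) :
    diagonal (fun i => √(d i)) * (G * diagonal d) * diagonal (fun i => (√(d i))⁻¹) =
      diagonal (fun i => √(d i)) * G * diagonal (fun i => √(d i)) := by
  rw [← diagonal_sqrt_mul_self fun i => (hd i).le]
  simp only [Matrix.mul_assoc, diagonal_sqrt_mul_diagonal_inv_sqrt hd, Matrix.mul_one]

theorem PosDef.diagonal_sqrt_mul_mul_diagonal_sqrt (hG : G.PosDef) (hd : ∀ i, 0 < d i) :
    (diagonal (fun i => √(d i)) * G * diagonal (fun i => √(d i))).PosDef := by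
  simpa using hG.conjTranspose_mul_mul_same (mulVec_injective_of_isUnit (isUnit_diagonal_sqrt hd))

theorem PosDef.pos_of_hasEigenvalue_mul_diagonal (hG : G.PosDef) (hd : ∀ i, 0 < d i) {β : ℝ}
    (hβ : HasEigenvalue (toLin' (G * diagonal d)) β) : 0 < β := by
  refine (hG.diagonal_sqrt_mul_mul_diagonal_sqrt hd).pos_of_hasEigenvalue_of_semiconjBy
    (isUnit_diagonal_sqrt hd) ?_ hβ
  rw [SemiconjBy, ← diagonal_sqrt_mul_self fun i => (hd i).le]
  simp only [Matrix.mul_assoc]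

end SqrtDiagonal

end Matrix

theorem stmt9_general (m1 n : ℕ) (P : Fin m1 → Fin n → ℝ) (lamstar : Fin m1 → ℝ)
    (hlam : ∀ i, 0 < lamstar i)
    (hQ : ∀ j, 0 < ∑ i, lamstar i * P i j)
    (hrank : (Matrix.of P).rank = m1)
    (B : Matrix (Fin m1) (Fin m1) ℝ)
    (hB : ∀ i' i, B i' i = lamstar i * ∑ j, P i' j * P i j / (∑ k, lamstar k * P k j)) :
    (Matrix.diagonal (fun i => Real.sqrt (lamstar i)) * B *
        Matrix.diagonal (fun i => (Real.sqrt (lamstar i))⁻¹)).PosDef ∧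
      (∀ β : ℝ, Module.End.HasEigenvalue (Matrix.toLin' B) β → 0 < β) := by
  set G := of P * diagonal (fun j => (∑ k, lamstar k * P k j)⁻¹) * (of P)ᵀ with hG_def
  have hBG : B = G * diagonal lamstar := by
    ext i' i
    rw [mul_diagonal, hB, hG_def, Matrix.mul_apply, Finset.mul_sum, Finset.sum_mul]
    simp only [mul_diagonal, transpose_apply, of_apply]
    exact Finset.sum_congr rfl fun j _ => by ring
  have hG : G.PosDef := by
    simpa using (PosDef.diagonal fun j => inv_pos.2 (hQ j)).mul_mul_conjTranspose_same
      (vecMul_injective_of_rank_eq_card_s9 (by simpa using hrank))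
  rw [hBG]
  exact ⟨diagonal_sqrt_conj_mul_diagonal hlam ▸ hG.diagonal_sqrt_mul_mul_diagonal_sqrt hlam,
    fun β => hG.pos_of_hasEigenvalue_mul_diagonal hlam⟩

theorem stmt9 (m1 n : ℕ) (P : Fin m1 → Fin n → ℝ) (lamstar : Fin m1 → ℝ)
    (hrow : ∀ i, (∀ j, 0 ≤ P i j) ∧ ∑ j, P i j = 1)
    (hlam : ∀ i, 0 < lamstar i)
    (hQ : ∀ j, 0 < ∑ i, lamstar i * P i j)
    (hrank : (Matrix.of P).rank = m1)
    (B : Matrix (Fin m1) (Fin m1) ℝ)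
    (hB : ∀ i' i, B i' i = lamstar i * ∑ j, P i' j * P i j / (∑ k, lamstar k * P k j)) :
    (Matrix.diagonal (fun i => Real.sqrt (lamstar i)) * B *
        Matrix.diagonal (fun i => (Real.sqrt (lamstar i))⁻¹)).PosDef ∧
      (∀ β : ℝ, Module.End.HasEigenvalue (Matrix.toLin' B) β → 0 < β) :=
  stmt9_general m1 n P lamstar hlam hQ hrank B hB
end

section
/- Consider $\xi_i^{N+1} = \xi_i^N - \xi_i^N \sum_{i'=1}^{m_2} q_{ii'}\xi_{i'}^N$ with probability vectors $q_i$, initial values $0<\xi_i^0\leq 1/2$, and suppose all initial values are equal: $\xi_1^0 = \cdots = \xi_{m_2}^0 = 1/2$. Then $\xi_1^N = \cdots = \xi_{m_2}^N$ for all $N$ and $\lim_{N\to\infty} N\xi_i^N = 1$ for every $i$. -/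
open Filter Finset

/-!
When all initial values are equal, the row sums $\sum_{i'} q_{ii'} = 1$ keep them equal, and the
common value follows the scalar recursion $a_{n+1} = a_n(1 - a_n)$. Taking reciprocals,
$1/a_{n+1} = 1/a_n + 1/(1 - a_n)$, so $1/a_n = 1/a_0 + \sum_{k<n} 1/(1 - a_k)$. Hence $1/a_n \ge n$,
so $a_n \to 0$, the summands tend to $1$, and by Cesàro $1/(n a_n) \to 1$.
-/

section SubMulSelf

variable {a : ℕ → ℝ} (ha : ∀ n, a (n + 1) = a n - a n * a n)
include ha

lemma pos_and_lt_one_of_sub_mul_self (h0 : 0 < a 0) (h1 : a 0 < 1) (n : ℕ) :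
    0 < a n ∧ a n < 1 := by
  induction n with
  | zero => exact ⟨h0, h1⟩
  | succ n ih =>
    obtain ⟨hpos, hlt⟩ := ih
    rw [ha n]
    constructor <;> nlinarith

lemma inv_eq_inv_zero_add_sum_of_sub_mul_self (h0 : 0 < a 0) (h1 : a 0 < 1) (n : ℕ) :
    (a n)⁻¹ = (a 0)⁻¹ + ∑ k ∈ range n, (1 - a k)⁻¹ := by
  induction n with
  | zero => simp
  | succ n ih =>
    obtain ⟨hpos, hlt⟩ := pos_and_lt_one_of_sub_mul_self ha h0 h1 n
    have hsub : 1 - a n ≠ 0 := by linarith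
    rw [sum_range_succ, ← add_assoc, ← ih, ha n]
    field_simp
    ring

lemma tendsto_zero_of_sub_mul_self (h0 : 0 < a 0) (h1 : a 0 < 1) :
    Tendsto a atTop (nhds 0) := by
  have hinv_ge (n : ℕ) : (n : ℝ) ≤ (a n)⁻¹ := by
    have hsum : (n : ℝ) ≤ ∑ k ∈ range n, (1 - a k)⁻¹ := by
      calc (n : ℝ) = ∑ _k ∈ range n, (1 : ℝ) := by simp
        _ ≤ _ := sum_le_sum fun k _ => by
          obtain ⟨hpos, hlt⟩ := pos_and_lt_one_of_sub_mul_self ha h0 h1 k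
          rw [le_inv_comm₀ one_pos (by linarith)]
          linarith
    rw [inv_eq_inv_zero_add_sum_of_sub_mul_self ha h0 h1]
    linarith [inv_pos.2 h0]
  have hinv : Tendsto (fun n => (a n)⁻¹) atTop atTop :=
    tendsto_atTop_mono hinv_ge tendsto_natCast_atTop_atTop
  simpa [Function.comp_def] using tendsto_inv_atTop_zero.comp hinv

theorem tendsto_natCast_mul_of_sub_mul_self (h0 : 0 < a 0) (h1 : a 0 < 1) :
    Tendsto (fun n : ℕ => (n : ℝ) * a n) atTop (nhds 1) := by
  have hsummand : Tendsto (fun n => (1 - a n)⁻¹) atTop (nhds 1) := by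
    simpa using ((tendsto_zero_of_sub_mul_self ha h0 h1).const_sub 1).inv₀ (by norm_num)
  have hconst : Tendsto (fun n : ℕ => (n : ℝ)⁻¹ * (a 0)⁻¹) atTop (nhds 0) := by
    simpa using (tendsto_inv_atTop_zero.comp tendsto_natCast_atTop_atTop).mul_const (a 0)⁻¹
  have hrecip : Tendsto (fun n : ℕ => ((n : ℝ) * a n)⁻¹) atTop (nhds 1) := by
    have hsum := hconst.add hsummand.cesaro
    rw [zero_add] at hsum
    refine hsum.congr fun n => ?_
    rw [mul_inv, inv_eq_inv_zero_add_sum_of_sub_mul_self ha h0 h1 n]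
    ring
  simpa using hrecip.inv₀ one_ne_zero

end SubMulSelf

lemma sum_mul_const_of_sum_eq_one {ι : Type*} (s : Finset ι) (q : ι → ℝ) (c : ℝ)
    (hq : ∑ i ∈ s, q i = 1) : ∑ i ∈ s, q i * c = c := by
  rw [← sum_mul, hq, one_mul]

theorem stmt12 (m2 : ℕ) (q : Fin m2 → Fin m2 → ℝ) (ξ : ℕ → Fin m2 → ℝ)
    (hq : ∀ i, (∀ i', 0 ≤ q i i') ∧ ∑ i', q i i' = 1)
    (h0 : ∀ i, ξ 0 i = 1/2)
    (hrec : ∀ N i, ξ (N+1) i = ξ N i - ξ N i * ∑ i', q i i' * ξ N i') :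
    (∀ N, ∀ i i' : Fin m2, ξ N i = ξ N i') ∧
      (∀ i, Filter.Tendsto (fun N : ℕ => (N : ℝ) * ξ N i) Filter.atTop (nhds 1)) := by
  set a : ℕ → ℝ := fun N => (fun x => x - x * x)^[N] (1 / 2)
  have ha (N : ℕ) : a (N + 1) = a N - a N * a N := Function.iterate_succ_apply' _ _ _
  have hξ (N : ℕ) : ∀ i, ξ N i = a N := by
    induction N with
    | zero => exact h0
    | succ N ih =>
      intro i
      simp only [hrec N i, ih, sum_mul_const_of_sum_eq_one _ _ _ (hq i).2, ha]
  have hlim := tendsto_natCast_mul_of_sub_mul_self ha (by norm_num [a]) (by norm_num [a])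
  exact ⟨fun N i i' => by rw [hξ N i, hξ N i'], fun i => by simpa only [hξ _ i] using hlim⟩
end

section
/- Under the hypotheses that the sequences $\xi_1^N \geq \xi_2^N \geq \cdots \geq \xi_{m_2}^N$ for $N \geq N_0$ (ordering assumption), the diagonally dominant condition $q_{ii} > \sum_{i'\neq i} q_{ii'}$ holds for each $i$, each $q_i$ is a probability vector, and $0 < \xi_i^0 \leq 1/2$, the recurrence $\xi_i^{N+1} = \xi_i^N - \xi_i^N\sum_{i'} q_{ii'}\xi_{i'}^N$ satisfies $\lim_{N\to\infty} N\xi_i^N = 1$ for all $i = 1,\ldots,m_2$. -/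
/-!
Write `sᵢᴺ = (q ξᴺ)ᵢ`, so that `ξᵢᴺ⁺¹ = ξᵢᴺ (1 - sᵢᴺ)` and
`1/ξᵢᴺ⁺¹ - 1/ξᵢᴺ = (sᵢᴺ/ξᵢᴺ) / (1 - sᵢᴺ)`. Since `qᵢᵢ > 1/2` this increment is at least `1/2`,
so `ξᴺ → 0`. Once the largest and smallest components sit at fixed indices `f` and `l`, the
constant `c = q_ff + q_ll - 1` is positive and the ratio `ρᴺ = ξₗᴺ / ξ_fᴺ ≤ 1` grows by at least
`c ρᴺ (1 - ρᴺ) ξ_fᴺ`. As `1/ξ_fᴺ` grows by at most `2` per step, `∑ ξ_fᴺ` diverges, which forces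
`ρᴺ → 1`. Every `sᵢᴺ/ξᵢᴺ` lies between `ρᴺ` and `1/ρᴺ`, so the increments of `1/ξᵢᴺ` tend to `1`,
and Cesàro averaging gives `N ξᵢᴺ → 1`.
-/

open Filter Finset Topology Matrix

section RowStochastic

variable {ι : Type*} [Fintype ι] [DecidableEq ι] {q : Matrix ι ι ℝ} {x : ι → ℝ} {B : ℝ}

lemma mulVec_le_of_le (hq : q ∈ rowStochastic ℝ ι) (hx : ∀ j, x j ≤ B) (i : ι) :
    (q *ᵥ x) i ≤ B :=
  calc (q *ᵥ x) i ≤ ∑ j, q i j * B :=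
        sum_le_sum fun j _ => mul_le_mul_of_nonneg_left (hx j) (nonneg_of_mem_rowStochastic hq)
    _ = B := by rw [← sum_mul, sum_row_of_mem_rowStochastic hq, one_mul]

lemma le_mulVec_of_le (hq : q ∈ rowStochastic ℝ ι) (hx : ∀ j, B ≤ x j) (i : ι) :
    B ≤ (q *ᵥ x) i :=
  calc B = ∑ j, q i j * B := by rw [← sum_mul, sum_row_of_mem_rowStochastic hq, one_mul]
    _ ≤ (q *ᵥ x) i :=
        sum_le_sum fun j _ => mul_le_mul_of_nonneg_left (hx j) (nonneg_of_mem_rowStochastic hq)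

lemma diag_mul_le_mulVec (hq : q ∈ rowStochastic ℝ ι) (hx : ∀ j, 0 ≤ x j) (i : ι) :
    q i i * x i ≤ (q *ᵥ x) i :=
  single_le_sum (f := fun j => q i j * x j)
    (fun j _ => mul_nonneg (nonneg_of_mem_rowStochastic hq) (hx j)) (mem_univ i)

lemma mulVec_apply_eq_diag_add (i : ι) :
    (q *ᵥ x) i = q i i * x i + ∑ j ∈ univ.erase i, q i j * x j :=
  (add_sum_erase _ _ (mem_univ i)).symm

lemma sum_erase_eq_one_sub_diag (hq : q ∈ rowStochastic ℝ ι) (i : ι) :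
    ∑ j ∈ univ.erase i, q i j = 1 - q i i := by
  rw [← sum_row_of_mem_rowStochastic hq i, ← add_sum_erase _ _ (mem_univ i), add_sub_cancel_left]

lemma diag_mul_add_le_mulVec (hq : q ∈ rowStochastic ℝ ι) (hx : ∀ j, B ≤ x j) (i : ι) :
    q i i * x i + (1 - q i i) * B ≤ (q *ᵥ x) i := by
  rw [mulVec_apply_eq_diag_add, ← sum_erase_eq_one_sub_diag hq, sum_mul]
  gcongr with j
  exacts [nonneg_of_mem_rowStochastic hq, hx j]

lemma mulVec_le_diag_mul_add (hq : q ∈ rowStochastic ℝ ι) (hx : ∀ j, x j ≤ B) (i : ι) :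
    (q *ᵥ x) i ≤ q i i * x i + (1 - q i i) * B := by
  rw [mulVec_apply_eq_diag_add, ← sum_erase_eq_one_sub_diag hq, sum_mul]
  gcongr with j
  exacts [nonneg_of_mem_rowStochastic hq, hx j]

lemma half_lt_diag (hq : q ∈ rowStochastic ℝ ι) {i : ι}
    (hdd : ∑ j ∈ univ.erase i, q i j < q i i) : 1 / 2 < q i i := by
  rw [sum_erase_eq_one_sub_diag hq] at hdd
  linarith

end RowStochastic

lemma inv_mul_one_sub_sub_inv {x s : ℝ} (hx : x ≠ 0) (hs : s ≠ 1) :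
    (x * (1 - s))⁻¹ - x⁻¹ = s / x / (1 - s) := by
  have : 1 - s ≠ 0 := sub_ne_zero.2 hs.symm
  field_simp
  ring

lemma tendsto_div_natCast_of_tendsto_sub {u : ℕ → ℝ} {l : ℝ}
    (h : Tendsto (fun n => u (n + 1) - u n) atTop (𝓝 l)) :
    Tendsto (fun n : ℕ => u n / n) atTop (𝓝 l) := by
  have hmean : Tendsto (fun n : ℕ => (n : ℝ)⁻¹ * (u n - u 0)) atTop (𝓝 l) := by
    simpa only [sum_range_sub] using h.cesaro
  have hinit : Tendsto (fun n : ℕ => (n : ℝ)⁻¹ * u 0) atTop (𝓝 0) := by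
    simpa using tendsto_inv_atTop_nhds_zero_nat.mul_const (u 0)
  simpa using (hmean.add hinit).congr fun n => by ring

lemma not_summable_of_inv_succ_le {a : ℕ → ℝ} {C : ℝ} (ha : ∀ n, 0 < a n)
    (h : ∀ n, (a (n + 1))⁻¹ ≤ (a n)⁻¹ + C) : ¬Summable a := by
  set K := (a 0)⁻¹ + |C|
  have hK : 0 < K := by have := ha 0; positivity
  have hinv : ∀ n : ℕ, (a n)⁻¹ ≤ K * (n + 1) := by
    intro n
    induction n with
    | zero => simp [K]
    | succ n ih =>
      push_cast
      linarith [h n, le_abs_self C, inv_pos.2 (ha 0)]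
  have hharm : ∀ n : ℕ, K⁻¹ * (1 / ((n : ℝ) + 1)) ≤ a n := fun n => by
    rw [one_div, ← mul_inv]
    exact inv_le_of_inv_le₀ (ha n) (hinv n)
  intro hsum
  refine Real.not_summable_one_div_natCast ((summable_nat_add_iff 1).1 ?_)
  have := (hsum.of_nonneg_of_le (fun n => by positivity) hharm).mul_left K
  simpa [hK.ne'] using this

lemma tendsto_one_of_add_mul_one_sub_le {r a : ℕ → ℝ} {c : ℝ} (hc : 0 < c) (hr0 : 0 < r 0)
    (hr1 : ∀ n, r n ≤ 1) (ha : ∀ n, 0 ≤ a n) (hdiv : ¬Summable a)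
    (hstep : ∀ n, r n + c * r n * a n * (1 - r n) ≤ r (n + 1)) :
    Tendsto r atTop (𝓝 1) := by
  have hincr : ∀ n, 0 < r n → r n ≤ r (n + 1) := fun n hn => by
    have : 0 ≤ c * r n * a n * (1 - r n) :=
      mul_nonneg (mul_nonneg (mul_nonneg hc.le hn.le) (ha n)) (sub_nonneg.2 (hr1 n))
    linarith [hstep n]
  have hpos : ∀ n, 0 < r n := fun n => by
    induction n with
    | zero => exact hr0
    | succ n ih => exact ih.trans_le (hincr n ih)
  have hmono : Monotone r := monotone_nat_of_le_succ fun n => hincr n (hpos n)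
  have hbdd : BddAbove (Set.range r) := ⟨1, Set.forall_mem_range.2 hr1⟩
  have hlim := tendsto_atTop_ciSup hmono hbdd
  set L := ⨆ n, r n
  have hrL : ∀ n, r n ≤ L := le_ciSup hbdd
  suffices hL : 1 ≤ L by rwa [show L = 1 from le_antisymm (ciSup_le hr1) hL] at hlim
  by_contra! hL
  -- away from the limit, each step gains at least `d * a n`, and the total gain is at most 1
  set d := c * r 0 * (1 - L)
  have hd : 0 < d := mul_pos (mul_pos hc hr0) (by linarith)
  have hgain : ∀ n, d * a n ≤ r (n + 1) - r n := fun n => by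
    have : r 0 * (1 - L) ≤ r n * (1 - r n) :=
      mul_le_mul (hmono (Nat.zero_le n)) (by linarith [hrL n]) (by linarith) (hpos n).le
    have : d * a n ≤ c * r n * a n * (1 - r n) := by
      calc d * a n = c * a n * (r 0 * (1 - L)) := by ring
        _ ≤ c * a n * (r n * (1 - r n)) := by gcongr; exact mul_nonneg hc.le (ha n)
        _ = c * r n * a n * (1 - r n) := by ring
    linarith [hstep n]
  refine hdiv (summable_of_sum_range_le (c := 1 / d) ha fun n => (le_div_iff₀' hd).2 ?_)
  calc d * ∑ i ∈ range n, a i = ∑ i ∈ range n, d * a i := mul_sum _ _ _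
    _ ≤ ∑ i ∈ range n, (r (i + 1) - r i) := sum_le_sum fun i _ => hgain i
    _ = r n - r 0 := sum_range_sub r n
    _ ≤ 1 := by linarith [hr1 n]

structure IsArimotoBlahutSeq {ι : Type*} [Fintype ι] [DecidableEq ι]
    (q : Matrix ι ι ℝ) (ξ : ℕ → ι → ℝ) : Prop where
  stochastic : q ∈ rowStochastic ℝ ι
  init : ∀ i, 0 < ξ 0 i ∧ ξ 0 i ≤ 1 / 2
  succ : ∀ N i, ξ (N + 1) i = ξ N i * (1 - (q *ᵥ ξ N) i)

namespace IsArimotoBlahutSeq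

variable {ι : Type*} [Fintype ι] [DecidableEq ι] {q : Matrix ι ι ℝ} {ξ : ℕ → ι → ℝ}

lemma pos_and_le_half (h : IsArimotoBlahutSeq q ξ) (N : ℕ) (i : ι) :
    0 < ξ N i ∧ ξ N i ≤ 1 / 2 := by
  induction N generalizing i with
  | zero => exact h.init i
  | succ N ih =>
    have hs0 : 0 ≤ (q *ᵥ ξ N) i :=
      nonneg_mulVec_of_mem_rowStochastic h.stochastic (fun j => (ih j).1.le) i
    have hs1 : (q *ᵥ ξ N) i ≤ 1 / 2 := mulVec_le_of_le h.stochastic (fun j => (ih j).2) i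
    obtain ⟨hx0, hx1⟩ := ih i
    rw [h.succ]
    constructor <;> nlinarith

lemma pos (h : IsArimotoBlahutSeq q ξ) (N : ℕ) (i : ι) : 0 < ξ N i :=
  (h.pos_and_le_half N i).1

lemma mulVec_nonneg (h : IsArimotoBlahutSeq q ξ) (N : ℕ) (i : ι) : 0 ≤ (q *ᵥ ξ N) i :=
  nonneg_mulVec_of_mem_rowStochastic h.stochastic (fun j => (h.pos N j).le) i

lemma mulVec_le_half (h : IsArimotoBlahutSeq q ξ) (N : ℕ) (i : ι) : (q *ᵥ ξ N) i ≤ 1 / 2 :=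
  mulVec_le_of_le h.stochastic (fun j => (h.pos_and_le_half N j).2) i

lemma inv_succ_sub_inv (h : IsArimotoBlahutSeq q ξ) (N : ℕ) (i : ι) :
    (ξ (N + 1) i)⁻¹ - (ξ N i)⁻¹ = (q *ᵥ ξ N) i / ξ N i / (1 - (q *ᵥ ξ N) i) := by
  rw [h.succ]
  exact inv_mul_one_sub_sub_inv (h.pos N i).ne' (by linarith [h.mulVec_le_half N i])

lemma half_le_inv_succ_sub_inv (h : IsArimotoBlahutSeq q ξ) (hdiag : ∀ i, 1 / 2 < q i i)
    (N : ℕ) (i : ι) : 1 / 2 ≤ (ξ (N + 1) i)⁻¹ - (ξ N i)⁻¹ := by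
  have hx := h.pos N i
  have hs : q i i * ξ N i ≤ (q *ᵥ ξ N) i :=
    diag_mul_le_mulVec h.stochastic (fun j => (h.pos N j).le) i
  rw [h.inv_succ_sub_inv]
  calc 1 / 2 ≤ (q *ᵥ ξ N) i / ξ N i := by
        rw [le_div_iff₀ hx]; nlinarith [hdiag i]
    _ ≤ _ := le_div_self (div_nonneg (h.mulVec_nonneg N i) hx.le)
        (by linarith [h.mulVec_le_half N i]) (by linarith [h.mulVec_nonneg N i])

lemma inv_succ_le_inv_add_two (h : IsArimotoBlahutSeq q ξ) {N : ℕ} {f : ι}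
    (hmax : ∀ j, ξ N j ≤ ξ N f) : (ξ (N + 1) f)⁻¹ ≤ (ξ N f)⁻¹ + 2 := by
  have hx := h.pos N f
  have hs : (q *ᵥ ξ N) f ≤ ξ N f := mulVec_le_of_le h.stochastic hmax f
  have hs1 := h.mulVec_le_half N f
  rw [← sub_le_iff_le_add', h.inv_succ_sub_inv, div_le_iff₀ (by linarith)]
  calc (q *ᵥ ξ N) f / ξ N f ≤ 1 := div_le_one_of_le₀ hs hx.le
    _ ≤ 2 * (1 - (q *ᵥ ξ N) f) := by linarith

lemma tendsto_zero (h : IsArimotoBlahutSeq q ξ) (hdiag : ∀ i, 1 / 2 < q i i) (i : ι) :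
    Tendsto (fun N => ξ N i) atTop (𝓝 0) := by
  have hgrowth : ∀ N : ℕ, (N : ℝ) / 2 ≤ (ξ N i)⁻¹ := fun N => by
    induction N with
    | zero => simpa using (h.pos 0 i).le
    | succ N ih =>
      push_cast
      linarith [h.half_le_inv_succ_sub_inv hdiag N i]
  have hinv : Tendsto (fun N => (ξ N i)⁻¹) atTop atTop :=
    tendsto_atTop_mono hgrowth (tendsto_natCast_atTop_atTop.atTop_div_const two_pos)
  exact (tendsto_inv_atTop_zero.comp hinv).congr fun N => inv_inv (ξ N i)

lemma tendsto_mulVec_zero (h : IsArimotoBlahutSeq q ξ) (hdiag : ∀ i, 1 / 2 < q i i) (i : ι) :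
    Tendsto (fun N => (q *ᵥ ξ N) i) atTop (𝓝 0) := by
  simpa [mulVec, dotProduct] using
    tendsto_finsetSum univ fun j _ => (h.tendsto_zero hdiag j).const_mul (q i j)

lemma ratio_succ_ge (h : IsArimotoBlahutSeq q ξ) (hdiag : ∀ i, 1 / 2 < q i i) {N : ℕ} {f l : ι}
    (hmax : ∀ j, ξ N j ≤ ξ N f) (hmin : ∀ j, ξ N l ≤ ξ N j) :
    ξ N l / ξ N f + (q f f + q l l - 1) * (ξ N l / ξ N f) * ξ N f * (1 - ξ N l / ξ N f)
      ≤ ξ (N + 1) l / ξ (N + 1) f := by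
  set a := ξ N f
  set b := ξ N l
  set c := q f f + q l l - 1
  set sa := (q *ᵥ ξ N) f
  set sb := (q *ᵥ ξ N) l
  have ha : 0 < a := h.pos N f
  have hb : 0 < b := h.pos N l
  have hba : b ≤ a := hmax l
  have hsa0 : 0 ≤ sa := h.mulVec_nonneg N f
  have hsa1 : sa ≤ 1 / 2 := h.mulVec_le_half N f
  -- the extreme components pull their averages towards each other
  have hgap : c * (a - b) ≤ sa - sb := by
    have := diag_mul_add_le_mulVec h.stochastic hmin f
    have := mulVec_le_diag_mul_add h.stochastic hmax l
    linarith
  have hc : 0 ≤ c * (a - b) := mul_nonneg (by linarith [hdiag f, hdiag l]) (by linarith)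
  rw [h.succ, h.succ, le_div_iff₀ (by nlinarith)]
  calc (b / a + c * (b / a) * a * (1 - b / a)) * (a * (1 - sa))
      = b * (1 - sa) + b * (c * (a - b)) * (1 - sa) := by field_simp
    _ ≤ b * (1 - sa) + b * (c * (a - b)) := by
        grw [mul_le_of_le_one_right (mul_nonneg hb.le hc) (by linarith : 1 - sa ≤ 1)]
    _ ≤ b * (1 - sa) + b * (sa - sb) := by gcongr
    _ = b * (1 - sb) := by ring

variable {N₀ : ℕ} {f l : ι}

lemma tendsto_ratio_one (h : IsArimotoBlahutSeq q ξ) (hdiag : ∀ i, 1 / 2 < q i i)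
    (hmax : ∀ N ≥ N₀, ∀ j, ξ N j ≤ ξ N f) (hmin : ∀ N ≥ N₀, ∀ j, ξ N l ≤ ξ N j) :
    Tendsto (fun N => ξ N l / ξ N f) atTop (𝓝 1) := by
  rw [← tendsto_add_atTop_iff_nat N₀]
  refine tendsto_one_of_add_mul_one_sub_le (a := fun n => ξ (n + N₀) f)
    (c := q f f + q l l - 1) (by linarith [hdiag f, hdiag l]) (div_pos (h.pos _ l) (h.pos _ f))
    (fun n => div_le_one_of_le₀ (hmax _ (by omega) l) (h.pos _ f).le)
    (fun n => (h.pos _ f).le) ?_ fun n => ?_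
  · refine not_summable_of_inv_succ_le (C := 2) (fun n => h.pos _ f) fun n => ?_
    simpa only [Nat.add_right_comm n 1 N₀] using h.inv_succ_le_inv_add_two (hmax _ (by omega))
  · simpa only [Nat.add_right_comm n 1 N₀]
      using h.ratio_succ_ge hdiag (hmax _ (by omega)) (hmin _ (by omega))

lemma tendsto_mulVec_div_self (h : IsArimotoBlahutSeq q ξ) (hdiag : ∀ i, 1 / 2 < q i i)
    (hmax : ∀ N ≥ N₀, ∀ j, ξ N j ≤ ξ N f) (hmin : ∀ N ≥ N₀, ∀ j, ξ N l ≤ ξ N j) (i : ι) :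
    Tendsto (fun N => (q *ᵥ ξ N) i / ξ N i) atTop (𝓝 1) := by
  have hr := h.tendsto_ratio_one hdiag hmax hmin
  refine tendsto_of_tendsto_of_tendsto_of_le_of_le' hr (by simpa using hr.inv₀ one_ne_zero)
    ?_ ?_ <;> filter_upwards [eventually_ge_atTop N₀] with N hN
  · exact div_le_div₀ (h.mulVec_nonneg N i) (le_mulVec_of_le h.stochastic (hmin N hN) i)
      (h.pos N i) (hmax N hN i)
  · exact div_le_div₀ (h.pos N f).le (mulVec_le_of_le h.stochastic (hmax N hN) i)
      (h.pos N l) (hmin N hN i)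

theorem tendsto_natCast_mul (h : IsArimotoBlahutSeq q ξ) (hdiag : ∀ i, 1 / 2 < q i i)
    (hmax : ∀ N ≥ N₀, ∀ j, ξ N j ≤ ξ N f) (hmin : ∀ N ≥ N₀, ∀ j, ξ N l ≤ ξ N j) (i : ι) :
    Tendsto (fun N : ℕ => (N : ℝ) * ξ N i) atTop (𝓝 1) := by
  have hstep : Tendsto (fun N => (ξ (N + 1) i)⁻¹ - (ξ N i)⁻¹) atTop (𝓝 1) := by
    simp_rw [h.inv_succ_sub_inv]
    simpa [Pi.div_def] using (h.tendsto_mulVec_div_self hdiag hmax hmin i).div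
      (tendsto_const_nhds.sub (h.tendsto_mulVec_zero hdiag i)) (by norm_num : (1 : ℝ) - 0 ≠ 0)
  simpa using (tendsto_div_natCast_of_tendsto_sub (u := fun N => (ξ N i)⁻¹) hstep).inv₀ one_ne_zero

end IsArimotoBlahutSeq

theorem stmt14 (m2 N0 : ℕ) (q : Fin m2 → Fin m2 → ℝ) (ξ : ℕ → Fin m2 → ℝ)
    (hq : ∀ i, (∀ i', 0 ≤ q i i') ∧ ∑ i', q i i' = 1)
    (hdd : ∀ i, ∑ i' ∈ Finset.univ.erase i, q i i' < q i i)
    (h0 : ∀ i, 0 < ξ 0 i ∧ ξ 0 i ≤ 1/2)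
    (hrec : ∀ N i, ξ (N+1) i = ξ N i - ξ N i * ∑ i', q i i' * ξ N i')
    (hord : ∀ N, N0 ≤ N → ∀ i i' : Fin m2, i ≤ i' → ξ N i' ≤ ξ N i) :
    ∀ i, Filter.Tendsto (fun N : ℕ => (N : ℝ) * ξ N i) Filter.atTop (nhds 1) := by
  intro i
  have hm : 0 < m2 := i.pos
  have hq' : q ∈ rowStochastic ℝ (Fin m2) :=
    mem_rowStochastic_iff_sum.2 ⟨fun i j => (hq i).1 j, fun i => (hq i).2⟩
  have hseq : IsArimotoBlahutSeq q ξ :=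
    ⟨hq', h0, fun N i => by rw [hrec]; simp only [mulVec, dotProduct]; ring⟩
  exact hseq.tendsto_natCast_mul (fun j => half_lt_diag hq' (hdd j))
    (f := ⟨0, hm⟩) (l := ⟨m2 - 1, by omega⟩)
    (fun N hN j => hord N hN _ j (Fin.mk_le_of_le_val (Nat.zero_le _)))
    (fun N hN j => hord N hN j _ (Fin.le_iff_val_le_val.2 (Nat.le_sub_one_of_lt j.isLt))) i
end

section
/- With the hypotheses of the diagonally dominant condition and the ordering $\xi_1^N \geq \xi_3^N$ for $N \geq N_0$ in the canonical three-variable recurrence $\xi_i^{N+1} = \xi_i^N - \xi_i^N\sum_{i'=1}^3 q_{ii'}\xi_{i'}^N$, setting $\tau_i^N = \sum_{i'} q_{ii'}\xi_{i'}^N$ and $K = q_{11} - q_{31} - q_{32} = q_{33} - q_{12} - q_{13} > 0$, one has $\tau_1^N - \tau_3^N \geq K(\xi_1^N - \xi_3^N)$ for $N \geq N_0$, and consequently $\sum_{N=0}^\infty (\xi_1^N - \xi_3^N) < \infty$. -/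
/-!
Write `d = ξ₀ - ξ₂ ≥ 0` and `a = ξ₂`. Expanding the rates and using the ordering, the gap
`τ₀ - τ₂` dominates `K d`, which forces `d' ≤ d (1 - τ₂) - K a d` while `a' = a (1 - τ₂)`.
Hence the ratio `d / a` drops by at least `K d` at each step; being nonnegative, it can only
do so by a summable total.
-/

open Finset

theorem one_half_lt_of_sum_erase_lt {ι : Type*} [Fintype ι] [DecidableEq ι] {p : ι → ℝ} {i : ι}
    (hp : ∑ j, p j = 1) (h : ∑ j ∈ univ.erase i, p j < p i) : 1 / 2 < p i := by
  rw [sum_erase_eq_sub (mem_univ i), hp] at h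
  linarith

theorem sum_mul_le_of_le {ι : Type*} [Fintype ι] {p x : ι → ℝ} {c : ℝ}
    (hp : ∀ j, 0 ≤ p j) (hp1 : ∑ j, p j = 1) (hx : ∀ j, x j ≤ c) : ∑ j, p j * x j ≤ c :=
  calc ∑ j, p j * x j ≤ ∑ j, p j * c := sum_le_sum fun j _ => mul_le_mul_of_nonneg_left (hx j) (hp j)
    _ = c := by rw [← sum_mul, hp1, one_mul]

theorem sub_mul_pos_le_half {x t : ℝ} (hx : 0 < x ∧ x ≤ 1 / 2) (ht0 : 0 ≤ t) (ht : t ≤ 1 / 2) :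
    0 < x - x * t ∧ x - x * t ≤ 1 / 2 :=
  ⟨by nlinarith, by nlinarith⟩

section Recurrence

variable {ι : Type*} [Fintype ι] {q : ι → ι → ℝ} {ξ : ℕ → ι → ℝ}

theorem rate_nonneg_le_half (hq : ∀ i, (∀ j, 0 ≤ q i j) ∧ ∑ j, q i j = 1) {x : ι → ℝ}
    (hx : ∀ j, 0 < x j ∧ x j ≤ 1 / 2) (i : ι) :
    0 ≤ ∑ j, q i j * x j ∧ ∑ j, q i j * x j ≤ 1 / 2 :=
  ⟨sum_nonneg fun j _ => mul_nonneg ((hq i).1 j) (hx j).1.le,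
    sum_mul_le_of_le (hq i).1 (hq i).2 fun j => (hx j).2⟩

theorem recurrence_pos_le_half (hq : ∀ i, (∀ j, 0 ≤ q i j) ∧ ∑ j, q i j = 1)
    (h0 : ∀ i, 0 < ξ 0 i ∧ ξ 0 i ≤ 1 / 2)
    (hrec : ∀ N i, ξ (N + 1) i = ξ N i - ξ N i * ∑ j, q i j * ξ N j) :
    ∀ N i, 0 < ξ N i ∧ ξ N i ≤ 1 / 2 := by
  intro N
  induction N with
  | zero => exact h0
  | succ N ih =>
    intro i
    obtain ⟨hτ0, hτ⟩ := rate_nonneg_le_half hq ih i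
    rw [hrec N i]
    exact sub_mul_pos_le_half (ih i) hτ0 hτ

end Recurrence

theorem mul_sub_le_rate_sub_rate {q : Fin 3 → Fin 3 → ℝ} {x : Fin 3 → ℝ}
    (hq : ∀ i, (∀ j, 0 ≤ q i j) ∧ ∑ j, q i j = 1) (h21 : x 2 ≤ x 1) (h10 : x 1 ≤ x 0) :
    (q 0 0 - q 2 0 - q 2 1) * (x 0 - x 2) ≤ (∑ j, q 0 j * x j) - ∑ j, q 2 j * x j := by
  have hs0 := (hq 0).2
  have hs2 := (hq 2).2
  simp only [Fin.sum_univ_three] at hs0 hs2 ⊢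
  have defect : (q 0 0 * x 0 + q 0 1 * x 1 + q 0 2 * x 2) - (q 2 0 * x 0 + q 2 1 * x 1 + q 2 2 * x 2)
      - (q 0 0 - q 2 0 - q 2 1) * (x 0 - x 2) = q 2 1 * (x 0 - x 1) + q 0 1 * (x 1 - x 2) := by
    linear_combination x 2 * hs0 - x 2 * hs2
  linarith [mul_nonneg ((hq 2).1 1) (sub_nonneg.2 h10), mul_nonneg ((hq 0).1 1) (sub_nonneg.2 h21)]

theorem mul_sub_le_ratio_sub_ratio {K x₀ x₂ t₀ t₂ : ℝ} (hK : 0 ≤ K) (hx₂ : 0 < x₂)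
    (hx : x₂ ≤ x₀) (ht₂ : 0 ≤ t₂) (ht₂1 : t₂ < 1) (hgap : K * (x₀ - x₂) ≤ t₀ - t₂) :
    K * (x₀ - x₂) ≤ (x₀ - x₂) / x₂ - ((x₀ - x₀ * t₀) - (x₂ - x₂ * t₂)) / (x₂ - x₂ * t₂) := by
  have hpos : 0 < x₂ - x₂ * t₂ := by nlinarith
  have hKd : 0 ≤ K * (x₀ - x₂) := mul_nonneg hK (by linarith)
  rw [le_sub_iff_add_le, ← le_sub_iff_add_le', div_le_iff₀ hpos]
  have expand : (x₀ - x₂) / x₂ * (x₂ - x₂ * t₂) = (x₀ - x₂) * (1 - t₂) := by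
    field_simp
  rw [sub_mul, expand]
  nlinarith [mul_le_mul_of_nonneg_left hgap (hx₂.le.trans hx), mul_le_mul_of_nonneg_right hx hKd,
    mul_nonneg (mul_nonneg hKd hx₂.le) ht₂]

theorem summable_of_mul_le_sub_succ {K : ℝ} {d r : ℕ → ℝ} (N₀ : ℕ) (hK : 0 < K)
    (hd : ∀ n, N₀ ≤ n → 0 ≤ d n) (hr : ∀ n, N₀ ≤ n → 0 ≤ r n)
    (h : ∀ n, N₀ ≤ n → K * d n ≤ r n - r (n + 1)) : Summable d := by
  rw [← summable_nat_add_iff N₀]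
  refine summable_of_sum_range_le (c := r N₀ / K) (fun n => hd _ (Nat.le_add_left _ _)) fun m => ?_
  rw [le_div_iff₀ hK]
  calc (∑ n ∈ range m, d (n + N₀)) * K ≤ ∑ n ∈ range m, (r (n + N₀) - r (n + 1 + N₀)) := by
        rw [sum_mul]
        refine sum_le_sum fun n _ => ?_
        rw [mul_comm, Nat.add_right_comm]
        exact h _ (Nat.le_add_left _ _)
    _ = r N₀ - r (m + N₀) := by rw [sum_range_sub' (fun n => r (n + N₀)), zero_add]
    _ ≤ r N₀ := sub_le_self _ (hr _ (Nat.le_add_left _ _))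

theorem stmt15 (N0 : ℕ) (q : Fin 3 → Fin 3 → ℝ) (ξ : ℕ → Fin 3 → ℝ)
    (hq : ∀ i, (∀ i', 0 ≤ q i i') ∧ ∑ i', q i i' = 1)
    (hdd : ∀ i, ∑ i' ∈ Finset.univ.erase i, q i i' < q i i)
    (h0 : ∀ i, 0 < ξ 0 i ∧ ξ 0 i ≤ 1/2)
    (hrec : ∀ N i, ξ (N+1) i = ξ N i - ξ N i * ∑ i', q i i' * ξ N i')
    (hord : ∀ N, N0 ≤ N → ξ N 2 ≤ ξ N 1 ∧ ξ N 1 ≤ ξ N 0) :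
    0 < q 0 0 - q 2 0 - q 2 1 ∧
      q 0 0 - q 2 0 - q 2 1 = q 2 2 - q 0 1 - q 0 2 ∧
      (∀ N, N0 ≤ N →
        (q 0 0 - q 2 0 - q 2 1) * (ξ N 0 - ξ N 2)
          ≤ (∑ i', q 0 i' * ξ N i') - (∑ i', q 2 i' * ξ N i')) ∧
      Summable (fun N => ξ N 0 - ξ N 2) := by
  have hdiag i := one_half_lt_of_sum_erase_lt (hq i).2 (hdd i)
  have hs0 := (hq 0).2
  have hs2 := (hq 2).2
  simp only [Fin.sum_univ_three] at hs0 hs2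
  have hK : 0 < q 0 0 - q 2 0 - q 2 1 := by linarith [hdiag 0, hdiag 2]
  have hgap N hN := mul_sub_le_rate_sub_rate (x := ξ N) hq (hord N hN).1 (hord N hN).2
  have hpos := recurrence_pos_le_half hq h0 hrec
  refine ⟨hK, by linarith, hgap, ?_⟩
  refine summable_of_mul_le_sub_succ (r := fun N => (ξ N 0 - ξ N 2) / ξ N 2) N0 hK
    (fun N hN => sub_nonneg.2 ((hord N hN).1.trans (hord N hN).2))
    (fun N hN => div_nonneg (sub_nonneg.2 ((hord N hN).1.trans (hord N hN).2)) (hpos N 2).1.le)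
    fun N hN => ?_
  obtain ⟨hτ0, hτ⟩ := rate_nonneg_le_half hq (hpos N) 2
  simp only [hrec N]
  exact mul_sub_le_ratio_sub_ratio hK.le (hpos N 2).1 ((hord N hN).1.trans (hord N hN).2) hτ0
    (by linarith) (hgap N hN)
end
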